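/- arXiv:2007.01996 — 6 statements merged into one kernel-verified Lean document; each statement's English description precedes it below -/
import Mathlib

section
/- For every real number μ with 0 < μ < 1, the quantity maxS(μ,β) attains its minimum over β ∈ ℝ, the minimum value is 1 − √(1−μ), and the minimum is attained exactly at the unique point β = βopt(μ) = (1−√(1−μ))/(1+√(1−μ)). Concretely: (i) maxS(μ,β) ≥ 1 − √(1−μ) for all β ∈ ℝ; (ii) maxS(μ, βopt(μ)) = 1 − √(1−μ); (iii) if maxS(μ,β) = 1 − √(1−μ) for some β ∈ ℝ, then β = βopt(μ). -/
/-- The maximum of the moduli of the two complex roots (counted with multiplicity) of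
`λ² − (1+β)·μ·λ + β·μ = 0`; the roots are given by the quadratic formula
`((1+β)μ ± √((1+β)²μ² − 4βμ))/2` (complex square root via `cpow`). -/
noncomputable def maxS (μ β : ℝ) : ℝ :=
  max (Norm.norm (((((1 + β) * μ : ℝ) : ℂ) +
        ((((1 + β) ^ 2 * μ ^ 2 - 4 * β * μ : ℝ) : ℂ)) ^ ((1 : ℂ) / 2)) / 2))
      (Norm.norm (((((1 + β) * μ : ℝ) : ℂ) -
        ((((1 + β) ^ 2 * μ ^ 2 - 4 * β * μ : ℝ) : ℂ)) ^ ((1 : ℂ) / 2)) / 2))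

/-- The optimal coefficient `βopt(μ) = (1 − √(1−μ))/(1 + √(1−μ))`. -/
noncomputable def βopt (μ : ℝ) : ℝ := (1 - Real.sqrt (1 - μ)) / (1 + Real.sqrt (1 - μ))

/-!
Write `p(λ) = λ² − (1+β)μλ + βμ`, `ρ = maxS μ β`, `s = √(1−μ)` and `r = 1 − s`.
Since `p` has real coefficients, `p(R) ≥ 0` whenever `R ≥ ρ`: otherwise `p` would have a real
root larger than `R`. A direct computation gives `p(r) = s (βμ − r²)`, while `βμ = λ₁λ₂ ≤ ρ²`.
Hence `ρ ≤ r` forces `r² ≤ βμ ≤ ρ² ≤ r²`, so `ρ = r` and `βμ = r² = βopt(μ)·μ`; and at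
`β = βopt(μ)` the discriminant vanishes and the double root is `r`.
-/

open Real

lemma Complex.add_cpow_half_div_two_mul_sub (a z : ℂ) :
    (a + z ^ ((1 : ℂ) / 2)) / 2 * ((a - z ^ ((1 : ℂ) / 2)) / 2) = (a ^ 2 - z) / 4 := by
  have hz : (z ^ ((1 : ℂ) / 2)) ^ 2 = z := by simp [one_div]
  linear_combination (-1 / 4 : ℂ) * hz

lemma Complex.ofReal_cpow_half_of_nonneg {x : ℝ} (hx : 0 ≤ x) :
    (x : ℂ) ^ ((1 : ℂ) / 2) = ((√x : ℝ) : ℂ) := by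
  rw [sqrt_eq_rpow, Complex.ofReal_cpow hx]
  norm_num

section maxS

variable {μ β : ℝ}

lemma maxS_nonneg : 0 ≤ maxS μ β :=
  le_max_of_le_left (norm_nonneg _)

lemma mul_le_maxS_sq : β * μ ≤ maxS μ β ^ 2 := by
  have hprod := Complex.add_cpow_half_div_two_mul_sub (((1 + β) * μ : ℝ) : ℂ)
    (((1 + β) ^ 2 * μ ^ 2 - 4 * β * μ : ℝ) : ℂ)
  have hvieta : ((((1 + β) * μ : ℝ) : ℂ) ^ 2 - ((1 + β) ^ 2 * μ ^ 2 - 4 * β * μ : ℝ)) / 4 =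
      ((β * μ : ℝ) : ℂ) := by
    push_cast; ring
  rw [hvieta] at hprod
  calc β * μ ≤ ‖((β * μ : ℝ) : ℂ)‖ := by rw [Complex.norm_real, norm_eq_abs]; exact le_abs_self _
    _ ≤ maxS μ β * maxS μ β := by
      rw [← hprod, norm_mul]
      exact mul_le_mul (le_max_left _ _) (le_max_right _ _) (norm_nonneg _) maxS_nonneg
    _ = maxS μ β ^ 2 := (sq _).symm

lemma add_sqrt_discr_div_two_le_maxS (hD : 0 ≤ (1 + β) ^ 2 * μ ^ 2 - 4 * β * μ) :
    ((1 + β) * μ + √((1 + β) ^ 2 * μ ^ 2 - 4 * β * μ)) / 2 ≤ maxS μ β := by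
  refine le_trans ?_ (le_max_left _ _)
  rw [Complex.ofReal_cpow_half_of_nonneg hD, ← Complex.ofReal_add, ← Complex.ofReal_ofNat,
    ← Complex.ofReal_div, Complex.norm_real, norm_eq_abs]
  exact le_abs_self _

lemma maxS_of_discr_eq_zero (hD : (1 + β) ^ 2 * μ ^ 2 - 4 * β * μ = 0) :
    maxS μ β = |(1 + β) * μ| / 2 := by
  rw [maxS, hD, Complex.ofReal_zero, Complex.zero_cpow (by norm_num), add_zero, sub_zero, max_self,
    norm_div, Complex.norm_real, norm_eq_abs, Complex.norm_two]

lemma charPoly_nonneg_of_maxS_le {R : ℝ} (hR : maxS μ β ≤ R) :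
    0 ≤ R ^ 2 - (1 + β) * μ * R + β * μ := by
  by_contra! hneg
  have hD : (2 * R - (1 + β) * μ) ^ 2 < (1 + β) ^ 2 * μ ^ 2 - 4 * β * μ := by linarith
  have hroot := add_sqrt_discr_div_two_le_maxS (hD.le.trans' (sq_nonneg _))
  linarith [lt_sqrt_of_sq_lt hD]

end maxS

section optimum

variable {μ : ℝ}

lemma charPoly_at_one_sub_sqrt (h1 : μ ≤ 1) (β : ℝ) :
    (1 - √(1 - μ)) ^ 2 - (1 + β) * μ * (1 - √(1 - μ)) + β * μ =
      √(1 - μ) * (β * μ - (1 - √(1 - μ)) ^ 2) := by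
  linear_combination (-(1 - √(1 - μ))) * sq_sqrt (sub_nonneg.2 h1)

lemma βopt_mul (h1 : μ ≤ 1) : βopt μ * μ = (1 - √(1 - μ)) ^ 2 := by
  have hs := sq_sqrt (sub_nonneg.2 h1)
  have hpos : 0 < 1 + √(1 - μ) := by positivity
  rw [βopt, div_mul_eq_mul_div, div_eq_iff hpos.ne']
  linear_combination (1 - √(1 - μ)) * hs

lemma maxS_βopt (h0 : 0 ≤ μ) (h1 : μ ≤ 1) : maxS μ (βopt μ) = 1 - √(1 - μ) := by
  have hs := sq_sqrt (sub_nonneg.2 h1)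
  have ht := βopt_mul h1
  have ha : (1 + βopt μ) * μ = 2 * (1 - √(1 - μ)) := by linear_combination ht + hs
  have hs1 : √(1 - μ) ≤ 1 := sqrt_le_one.2 (by linarith)
  have hD : (1 + βopt μ) ^ 2 * μ ^ 2 - 4 * βopt μ * μ = 0 := by
    linear_combination ((1 + βopt μ) * μ + 2 * (1 - √(1 - μ))) * ha - 4 * ht
  rw [maxS_of_discr_eq_zero hD, ha, abs_of_nonneg (by linarith)]
  ring

lemma maxS_eq_and_mul_eq_of_maxS_le (h1 : μ < 1) {β : ℝ} (h : maxS μ β ≤ 1 - √(1 - μ)) :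
    maxS μ β = 1 - √(1 - μ) ∧ β * μ = (1 - √(1 - μ)) ^ 2 := by
  have hs : 0 < √(1 - μ) := sqrt_pos.2 (by linarith)
  have hp := charPoly_nonneg_of_maxS_le h
  rw [charPoly_at_one_sub_sqrt h1.le] at hp
  have hlow : (1 - √(1 - μ)) ^ 2 ≤ β * μ := by nlinarith
  have hup : maxS μ β ^ 2 ≤ (1 - √(1 - μ)) ^ 2 := pow_le_pow_left₀ maxS_nonneg h 2
  have hsq : maxS μ β ^ 2 = (1 - √(1 - μ)) ^ 2 := le_antisymm hup (hlow.trans mul_le_maxS_sq)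
  refine ⟨(pow_left_inj₀ maxS_nonneg (maxS_nonneg.trans h) two_ne_zero).1 hsq, ?_⟩
  linarith [mul_le_maxS_sq (μ := μ) (β := β)]

end optimum

theorem stmt0 (μ : ℝ) (h0 : 0 < μ) (h1 : μ < 1) :
    (∀ β : ℝ, 1 - Real.sqrt (1 - μ) ≤ maxS μ β) ∧
    maxS μ (βopt μ) = 1 - Real.sqrt (1 - μ) ∧
    (∀ β : ℝ, maxS μ β = 1 - Real.sqrt (1 - μ) → β = βopt μ) := by
  refine ⟨fun β => ?_, maxS_βopt h0.le h1.le, fun β hβ => ?_⟩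
  · by_contra! hlt
    exact hlt.ne (maxS_eq_and_mul_eq_of_maxS_le h1 hlt.le).1
  · have hmul := (maxS_eq_and_mul_eq_of_maxS_le h1 hβ.le).2
    exact mul_right_cancel₀ h0.ne' (hmul.trans (βopt_mul h1.le).symm)
end

section
/- For all real numbers μ₁, μ₂ with μ₂ < μ₁ < 0, the optimal values satisfy both: (i) min_{β∈ℝ} maxS(μ₁,β) < min_{β∈ℝ} maxS(μ₂,β), i.e. √(1−μ₁) − 1 < √(1−μ₂) − 1; and (ii) maxS(μ₁, βopt(μ₂)) < √(1−μ₂) − 1, i.e. evaluating the first quantity at the coefficient optimal for μ₂ gives a value strictly smaller than the optimal value for μ₂. -/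
/-!
If the discriminant `(1+β)²μ² − 4βμ` is negative, the two roots are complex conjugates, so both
have modulus `√(βμ)`, the square root of their product. The coefficient `βopt μ₂` is the one for
which the discriminant at `μ₂` vanishes, `(1+β)²μ₂ = 4β`; hence at `μ₁` the discriminant equals
`(1+β)²μ₁(μ₁ − μ₂) < 0`, and `maxS μ₁ β = √(βμ₁) < √(βμ₂) = √(1−μ₂) − 1` because `β < 0`.
-/

lemma Complex.ofReal_cpow_half_of_neg {x : ℝ} (hx : x < 0) :
    (x : ℂ) ^ ((1 : ℂ) / 2) = (Real.sqrt (-x) : ℂ) * I := by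
  have h_sqrt : (-(x : ℂ)) ^ ((1 : ℂ) / 2) = (Real.sqrt (-x) : ℂ) := by
    rw [← ofReal_neg, show ((1 : ℂ) / 2) = ((1 / 2 : ℝ) : ℂ) by norm_num,
      ← ofReal_cpow (by linarith), Real.sqrt_eq_rpow]
  have h_exp : exp (Real.pi * I * ((1 : ℂ) / 2)) = I := by
    rw [show (Real.pi : ℂ) * I * ((1 : ℂ) / 2) = ((Real.pi / 2 : ℝ) : ℂ) * I by push_cast; ring,
      exp_mul_I]
    push_cast
    rw [cos_pi_div_two, sin_pi_div_two]
    ring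
  rw [ofReal_cpow_of_nonpos hx.le, h_sqrt, h_exp]

lemma maxS_eq_sqrt_of_discr_neg {μ β : ℝ} (hD : (1 + β) ^ 2 * μ ^ 2 - 4 * β * μ < 0) :
    maxS μ β = Real.sqrt (β * μ) := by
  unfold maxS
  rw [Complex.ofReal_cpow_half_of_neg hD]
  set a : ℝ := (1 + β) * μ with ha
  set b : ℝ := Real.sqrt (-((1 + β) ^ 2 * μ ^ 2 - 4 * β * μ))
  have hb : b ^ 2 = -((1 + β) ^ 2 * μ ^ 2 - 4 * β * μ) := Real.sq_sqrt (by linarith)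
  have h_plus :
      ((a : ℂ) + b * Complex.I) / 2 = ((a / 2 : ℝ) : ℂ) + ((b / 2 : ℝ) : ℂ) * Complex.I := by
    push_cast; ring
  have h_minus :
      ((a : ℂ) - b * Complex.I) / 2 = ((a / 2 : ℝ) : ℂ) + ((-b / 2 : ℝ) : ℂ) * Complex.I := by
    push_cast; ring
  have h_norm_plus : (a / 2) ^ 2 + (b / 2) ^ 2 = β * μ := by rw [ha]; linear_combination hb / 4
  have h_norm_minus : (a / 2) ^ 2 + (-b / 2) ^ 2 = β * μ := by rw [ha]; linear_combination hb / 4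
  rw [h_plus, h_minus, Complex.norm_add_mul_I, Complex.norm_add_mul_I, h_norm_plus, h_norm_minus,
    max_self]

section βopt

variable {μ : ℝ}

lemma one_add_βopt : 1 + βopt μ = 2 / (1 + Real.sqrt (1 - μ)) := by
  have hs : 0 < 1 + Real.sqrt (1 - μ) := by positivity
  unfold βopt
  field_simp
  ring

lemma βopt_discr_eq_zero (hμ : μ ≤ 1) : (1 + βopt μ) ^ 2 * μ = 4 * βopt μ := by
  have hs : Real.sqrt (1 - μ) ^ 2 = 1 - μ := Real.sq_sqrt (by linarith)
  have hs' : 0 < 1 + Real.sqrt (1 - μ) := by positivity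
  rw [one_add_βopt]
  unfold βopt
  field_simp
  linear_combination 4 * hs

lemma βopt_mul_self (hμ : μ ≤ 1) : βopt μ * μ = (Real.sqrt (1 - μ) - 1) ^ 2 := by
  have hs : Real.sqrt (1 - μ) ^ 2 = 1 - μ := Real.sq_sqrt (by linarith)
  have hs' : 0 < 1 + Real.sqrt (1 - μ) := by positivity
  unfold βopt
  field_simp
  linear_combination (1 - Real.sqrt (1 - μ)) * hs

lemma one_lt_sqrt_one_sub (hμ : μ < 0) : 1 < Real.sqrt (1 - μ) :=
  Real.lt_sqrt_of_sq_lt (by linarith)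

lemma βopt_neg (hμ : μ < 0) : βopt μ < 0 :=
  div_neg_of_neg_of_pos (by linarith [one_lt_sqrt_one_sub hμ]) (by positivity)

lemma discr_βopt_neg {μ₁ μ₂ : ℝ} (h21 : μ₂ < μ₁) (h1 : μ₁ < 0) :
    (1 + βopt μ₂) ^ 2 * μ₁ ^ 2 - 4 * βopt μ₂ * μ₁ < 0 := by
  have h_one_add : 0 < 1 + βopt μ₂ := by rw [one_add_βopt]; positivity
  have h_factor : (1 + βopt μ₂) ^ 2 * μ₁ ^ 2 - 4 * βopt μ₂ * μ₁
      = (1 + βopt μ₂) ^ 2 * (μ₁ - μ₂) * μ₁ := by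
    linear_combination μ₁ * βopt_discr_eq_zero (μ := μ₂) (by linarith)
  rw [h_factor]
  exact mul_neg_of_pos_of_neg (by positivity) h1

end βopt

theorem stmt4 (μ₁ μ₂ : ℝ) (h21 : μ₂ < μ₁) (h1 : μ₁ < 0) :
    Real.sqrt (1 - μ₁) - 1 < Real.sqrt (1 - μ₂) - 1 ∧
    maxS μ₁ (βopt μ₂) < Real.sqrt (1 - μ₂) - 1 := by
  refine ⟨by gcongr; linarith, ?_⟩
  have h_pos : 0 < βopt μ₂ * μ₁ := mul_pos_of_neg_of_neg (βopt_neg (h21.trans h1)) h1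
  calc maxS μ₁ (βopt μ₂) = Real.sqrt (βopt μ₂ * μ₁) :=
        maxS_eq_sqrt_of_discr_neg (discr_βopt_neg h21 h1)
    _ < Real.sqrt (βopt μ₂ * μ₂) :=
        Real.sqrt_lt_sqrt h_pos.le (mul_lt_mul_of_neg_left h21 (βopt_neg (h21.trans h1)))
    _ = Real.sqrt (1 - μ₂) - 1 := by
        rw [βopt_mul_self (by linarith),
          Real.sqrt_sq (by linarith [one_lt_sqrt_one_sub (h21.trans h1)])]
end

section
/- Let M be an n×n complex matrix and β ∈ ℂ. A complex number λ is an eigenvalue of the 2n×2n block matrix T(M,β) = [[(1+β)M, −βM],[Iₙ, 0]] if and only if there exists an eigenvalue μ of M such that λ² − (1+β)μλ + βμ = 0. -/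
/-- `lam` is an eigenvalue of the square complex matrix `A`. -/
def IsEigenvalue {n : Type*} [Fintype n] (A : Matrix n n ℂ) (lam : ℂ) : Prop :=
  ∃ v : n → ℂ, v ≠ 0 ∧ A.mulVec v = lam • v

/-- The block matrix `T(M,β) = [[(1+β)M, −βM],[I, 0]]` (Jacobian of sAA(1)). -/
noncomputable def Tblock {n : ℕ} (M : Matrix (Fin n) (Fin n) ℂ) (β : ℂ) :
    Matrix (Fin n ⊕ Fin n) (Fin n ⊕ Fin n) ℂ :=
  Matrix.fromBlocks ((1 + β) • M) ((-β) • M) (1 : Matrix (Fin n) (Fin n) ℂ) 0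

/-!
The second block row forces every eigenvector of `T(M,β)` for `λ` to have the form `(λw, w)`,
and the first row then reads `((1+β)λ - β) M w = λ² w`: so `λ` is an eigenvalue exactly when
`λ²` is an eigenvalue of `((1+β)λ - β) M`. If `(1+β)λ - β ≠ 0` this gives the eigenvalue
`μ = λ² / ((1+β)λ - β)` of `M`; otherwise `λ = β = 0`, the quadratic is trivial, and any
eigenvalue of `M` (one exists over `ℂ` as soon as `n > 0`) will do.
-/

open Matrix

lemma exists_isEigenvalue {ι : Type*} [Fintype ι] [Nonempty ι] (M : Matrix ι ι ℂ) :
    ∃ μ, IsEigenvalue M μ := by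
  classical
  obtain ⟨μ, hμ⟩ := Module.End.exists_eigenvalue (toLin' M)
  obtain ⟨v, hv⟩ := hμ.exists_hasEigenvector
  exact ⟨μ, v, hv.2, by simpa using hv.apply_eq_smul⟩

lemma isEigenvalue_smul_iff {ι : Type*} [Fintype ι] (M : Matrix ι ι ℂ) (c d : ℂ) :
    IsEigenvalue (c • M) d ↔ ∃ μ, IsEigenvalue M μ ∧ d = c * μ := by
  constructor
  · rintro ⟨w, hw, hMw⟩
    by_cases hc : c = 0
    · obtain ⟨i, -⟩ := Function.ne_iff.mp hw
      have : Nonempty ι := ⟨i⟩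
      obtain ⟨μ, hμ⟩ := exists_isEigenvalue M
      have hd : d • w = 0 := by rw [← hMw, hc, zero_smul, zero_mulVec]
      exact ⟨μ, hμ, by rw [(smul_eq_zero.mp hd).resolve_right hw, hc, zero_mul]⟩
    · refine ⟨c⁻¹ * d, ⟨w, hw, ?_⟩, by field_simp⟩
      rw [mul_smul, ← hMw, smul_mulVec, smul_smul, inv_mul_cancel₀ hc, one_smul]
  · rintro ⟨μ, ⟨w, hw, hMw⟩, rfl⟩
    exact ⟨w, hw, by rw [smul_mulVec, hMw, smul_smul]⟩

lemma fromBlocks_companion_mulVec_eq_smul_iff {R ι : Type*} [CommRing R] [Fintype ι]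
    [DecidableEq ι] (M : Matrix ι ι R) (a b lam : R) (u w : ι → R) :
    fromBlocks (a • M) (b • M) 1 0 *ᵥ Sum.elim u w = lam • Sum.elim u w ↔
      u = lam • w ∧ ((a * lam + b) • M) *ᵥ w = lam ^ 2 • w := by
  have hsmul : lam • Sum.elim u w = Sum.elim (lam • u) (lam • w) := by
    ext (i | i) <;> rfl
  rw [fromBlocks_mulVec, hsmul, Sum.elim_eq_iff]
  simp only [Sum.elim_comp_inl, Sum.elim_comp_inr, one_mulVec, zero_mulVec, add_zero,
    smul_mulVec]
  rw [and_comm]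
  refine and_congr_right fun hu => ?_
  rw [hu, mulVec_smul, smul_smul, smul_smul, ← add_smul, ← sq, mul_comm a]

lemma isEigenvalue_fromBlocks_companion_iff {ι : Type*} [Fintype ι] [DecidableEq ι]
    (M : Matrix ι ι ℂ) (a b lam : ℂ) :
    IsEigenvalue (fromBlocks (a • M) (b • M) 1 0) lam ↔
      IsEigenvalue ((a * lam + b) • M) (lam ^ 2) := by
  constructor
  · rintro ⟨v, hv, hTv⟩
    rw [← Sum.elim_comp_inl_inr v, fromBlocks_companion_mulVec_eq_smul_iff] at hTv
    refine ⟨v ∘ Sum.inr, fun hw => hv ?_, hTv.2⟩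
    rw [← Sum.elim_comp_inl_inr v, hTv.1, hw, smul_zero, Sum.elim_zero_zero]
  · rintro ⟨w, hw, hMw⟩
    refine ⟨Sum.elim (lam • w) w, fun h => hw ?_, ?_⟩
    · exact funext fun i => congrFun h (Sum.inr i)
    · exact (fromBlocks_companion_mulVec_eq_smul_iff M a b lam _ w).2 ⟨rfl, hMw⟩

theorem stmt7 (n : ℕ) (M : Matrix (Fin n) (Fin n) ℂ) (β lam : ℂ) :
    IsEigenvalue (Tblock M β) lam ↔
      ∃ μ : ℂ, IsEigenvalue M μ ∧ lam ^ 2 - (1 + β) * μ * lam + β * μ = 0 := by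
  rw [Tblock, isEigenvalue_fromBlocks_companion_iff, isEigenvalue_smul_iff]
  refine exists_congr fun μ => and_congr_right fun _ => ?_
  constructor <;> intro h <;> linear_combination h
end

section
/- Let H be an n×n real symmetric positive definite matrix with smallest eigenvalue ℓ and largest eigenvalue L, 0 < ℓ < L. For each step length α ∈ (0, 1/L], set ρ_q(α) := 1 − αℓ (the spectral radius of I − αH). Then: (i) for all β ∈ ℝ, ρ(T(I−αH, β)) ≥ 1 − √(1−ρ_q(α)); (ii) ρ(T(I−αH, β)) = 1 − √(1−ρ_q(α)) when β = (1−√(1−ρ_q(α)))/(1+√(1−ρ_q(α))), and this is the only β achieving equality. Moreover, the map α ↦ 1 − √(1−ρ_q(α)) = 1 − √(αℓ) over α ∈ (0, 1/L] attains its minimum only at α = 1/L, where its value is 1 − √(ℓ/L). -/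
/-- `lam : ℂ` is an eigenvalue (over `ℂ`) of the square real matrix `A`. -/
def IsCEigenvalue {n : Type*} [Fintype n] (A : Matrix n n ℝ) (lam : ℂ) : Prop :=
  ∃ v : n → ℂ, v ≠ 0 ∧ (A.map (Complex.ofReal)).mulVec v = lam • v

/-- The spectral radius of a square real matrix: the maximum modulus of its
eigenvalues over `ℂ`. -/
noncomputable def specRad {n : Type*} [Fintype n] (A : Matrix n n ℝ) : ℝ :=
  sSup {r : ℝ | ∃ lam : ℂ, IsCEigenvalue A lam ∧ r = ‖lam‖}

/-- The block matrix `T(M,β) = [[(1+β)M, −βM],[I, 0]]` (Jacobian of sAA(1)). -/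
noncomputable def TAA {n : ℕ} (M : Matrix (Fin n) (Fin n) ℝ) (β : ℝ) :
    Matrix (Fin n ⊕ Fin n) (Fin n ⊕ Fin n) ℝ :=
  Matrix.fromBlocks ((1 + β) • M) ((-β) • M) (1 : Matrix (Fin n) (Fin n) ℝ) 0

/-!
Writing an eigenvector of `T(M, β)` as `(λ w, w)`, the eigenvalue equation reduces to `M w = μ w`
with `λ² − (1 + β) μ λ + β μ = 0`, so the spectrum of `T(1 − αH, β)` consists of roots of these
quadratics for `μ` in the spectrum of `1 − αH`, which lies in `[0, ρ]` with `ρ = 1 − αℓ = 1 − r²`.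
For `μ = ρ` the quadratic always has a root of modulus at least `1 − r`: when
`β ≤ β* = (1 − r) / (1 + r)` it is nonpositive at `1 − r`, hence has a real root beyond `1 − r`;
otherwise the product `βρ` of its roots exceeds `(1 − r)²`. Both bounds are strict unless `β = β*`.
At `β = β*` all these quadratics with `μ ∈ [0, ρ]` have nonpositive discriminant, so their roots
have modulus `√(β* μ) ≤ 1 − r`.
-/

open Matrix ComplexOrder

theorem exists_root_ge_of_eval_nonpos {s p x : ℝ} (hx : x ^ 2 - s * x + p ≤ 0) :
    ∃ y : ℝ, y ^ 2 - s * y + p = 0 ∧ x ≤ y ∧ (x ^ 2 - s * x + p < 0 → x < y) := by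
  have hD : 0 ≤ s ^ 2 - 4 * p := by nlinarith [sq_nonneg (2 * x - s)]
  have hd := Real.sq_sqrt hD
  refine ⟨(s + √(s ^ 2 - 4 * p)) / 2, by linear_combination hd / 4, ?_, fun hlt => ?_⟩
  · linarith [Real.le_sqrt_of_sq_le (show (2 * x - s) ^ 2 ≤ s ^ 2 - 4 * p by linarith)]
  · linarith [Real.lt_sqrt_of_sq_lt (show (2 * x - s) ^ 2 < s ^ 2 - 4 * p by linarith)]

theorem exists_root_norm_sq_ge (s p : ℂ) :
    ∃ lam : ℂ, lam ^ 2 - s * lam + p = 0 ∧ ‖p‖ ≤ ‖lam‖ ^ 2 := by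
  obtain ⟨d, hd⟩ := IsAlgClosed.exists_pow_nat_eq (s ^ 2 - 4 * p) two_pos
  have hprod : (s + d) / 2 * ((s - d) / 2) = p := by linear_combination -hd / 4
  have hroot : ∀ e : ℂ, e ^ 2 = s ^ 2 - 4 * p → ((s + e) / 2) ^ 2 - s * ((s + e) / 2) + p = 0 :=
    fun e he => by linear_combination he / 4
  have hnorm : ‖p‖ = ‖(s + d) / 2‖ * ‖(s - d) / 2‖ := by rw [← hprod, norm_mul]
  rcases le_total ‖(s - d) / 2‖ ‖(s + d) / 2‖ with h | h
  · exact ⟨_, hroot d hd, by rw [hnorm, sq]; gcongr⟩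
  · refine ⟨(s + -d) / 2, hroot (-d) (by rw [neg_sq, hd]), ?_⟩
    rw [hnorm, ← sub_eq_add_neg, sq]
    gcongr

theorem norm_sq_eq_of_root_of_discrim_nonpos {s p : ℝ} {lam : ℂ}
    (h : lam ^ 2 - s * lam + p = 0) (hdisc : s ^ 2 ≤ 4 * p) : ‖lam‖ ^ 2 = p := by
  have hre : lam.re ^ 2 - lam.im ^ 2 - s * lam.re + p = 0 := by
    simpa [sq, Complex.mul_re] using congrArg Complex.re h
  have him : lam.im * (2 * lam.re - s) = 0 := by
    have := congrArg Complex.im h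
    simp only [sq, Complex.add_im, Complex.sub_im, Complex.mul_im, Complex.ofReal_re,
      Complex.ofReal_im, zero_mul, add_zero, Complex.zero_im] at this
    linear_combination this
  rw [Complex.sq_norm, Complex.normSq_apply]
  rcases mul_eq_zero.mp him with h0 | h2
  · rw [h0] at hre ⊢
    nlinarith [sq_nonneg (2 * lam.re - s)]
  · have : s = 2 * lam.re := by linarith
    subst this
    linear_combination -hre

section OptimalMomentum

noncomputable def optimalMomentum (r : ℝ) : ℝ := (1 - r) / (1 + r)

variable {r : ℝ}

theorem optimalMomentum_mul_one_sub_sq (hr : 0 ≤ r) :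
    optimalMomentum r * (1 - r ^ 2) = (1 - r) ^ 2 := by
  rw [optimalMomentum]
  field_simp
  ring

theorem exists_root_norm_ge (hr0 : 0 < r) (hr1 : r < 1) (β : ℝ) :
    ∃ lam : ℂ, lam ^ 2 - (1 + β) * ((1 - r ^ 2 : ℝ) : ℂ) * lam + β * ((1 - r ^ 2 : ℝ) : ℂ) = 0 ∧
      1 - r ≤ ‖lam‖ ∧ (β ≠ optimalMomentum r → 1 - r < ‖lam‖) := by
  have hρ : 0 < 1 - r ^ 2 := by nlinarith
  have hgap : β * (1 - r ^ 2) - (1 - r) ^ 2 = (β - optimalMomentum r) * (1 - r ^ 2) := by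
    rw [sub_mul, optimalMomentum_mul_one_sub_sq hr0.le]
  rcases le_or_gt β (optimalMomentum r) with hβ | hβ
  · have heval : (1 - r) ^ 2 - (1 + β) * (1 - r ^ 2) * (1 - r) + β * (1 - r ^ 2)
        = r * ((β - optimalMomentum r) * (1 - r ^ 2)) := by
      rw [← hgap]; ring
    obtain ⟨y, hy, hge, hgt⟩ := exists_root_ge_of_eval_nonpos (x := 1 - r)
      (heval ▸ mul_nonpos_of_nonneg_of_nonpos hr0.le (mul_nonpos_of_nonpos_of_nonneg
        (by linarith) hρ.le))
    refine ⟨y, by exact_mod_cast hy, ?_, fun hne => ?_⟩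
    · exact hge.trans (by simpa using le_abs_self y)
    · refine (hgt ?_).trans_le (by simpa using le_abs_self y)
      rw [heval]
      exact mul_neg_of_pos_of_neg hr0
        (mul_neg_of_neg_of_pos (sub_neg.mpr (lt_of_le_of_ne hβ hne)) hρ)
  · obtain ⟨lam, hlam, hnorm⟩ := exists_root_norm_sq_ge ((1 + β) * ((1 - r ^ 2 : ℝ) : ℂ))
      (β * ((1 - r ^ 2 : ℝ) : ℂ))
    have hβρ : (1 - r) ^ 2 < β * (1 - r ^ 2) := by nlinarith [mul_pos (sub_pos.mpr hβ) hρ]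
    have hlt : 1 - r < ‖lam‖ := by
      refine lt_of_pow_lt_pow_left₀ 2 (norm_nonneg _) (hβρ.trans_le (le_of_eq_of_le ?_ hnorm))
      rw [← Complex.ofReal_mul, Complex.norm_real, Real.norm_of_nonneg (by nlinarith)]
    exact ⟨lam, by linear_combination hlam, hlt.le, fun _ => hlt⟩

theorem norm_le_of_root_optimalMomentum (hr0 : 0 ≤ r) (hr1 : r < 1) {μ : ℝ} (hμ0 : 0 ≤ μ)
    (hμ : μ ≤ 1 - r ^ 2) {lam : ℂ}
    (h : lam ^ 2 - (1 + (optimalMomentum r : ℂ)) * μ * lam + optimalMomentum r * μ = 0) :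
    ‖lam‖ ≤ 1 - r := by
  set b := optimalMomentum r
  have hb0 : 0 ≤ b := div_nonneg (by linarith) (by linarith)
  have hdisc_eq : (1 + b) ^ 2 * (1 - r ^ 2) = 4 * b := by
    simp only [b, optimalMomentum]
    field_simp
    ring
  have hdisc : ((1 + b) * μ) ^ 2 ≤ 4 * (b * μ) := by
    nlinarith [mul_le_mul_of_nonneg_left hμ (mul_nonneg (sq_nonneg (1 + b)) hμ0)]
  have hsq : ‖lam‖ ^ 2 = b * μ :=
    norm_sq_eq_of_root_of_discrim_nonpos (by push_cast; linear_combination h) hdisc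
  refine le_of_pow_le_pow_left₀ two_ne_zero (by linarith) ?_
  rw [hsq, ← optimalMomentum_mul_one_sub_sq hr0]
  exact mul_le_mul_of_nonneg_left hμ hb0

end OptimalMomentum

theorem re_map_ofReal_mulVec {m k : Type*} [Fintype k] (B : Matrix m k ℝ) (v : k → ℂ) (i : m) :
    ((B.map Complex.ofReal *ᵥ v) i).re = (B *ᵥ fun j => (v j).re) i := by
  simp [mulVec, dotProduct, Complex.re_sum]

theorem im_map_ofReal_mulVec {m k : Type*} [Fintype k] (B : Matrix m k ℝ) (v : k → ℂ) (i : m) :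
    ((B.map Complex.ofReal *ᵥ v) i).im = (B *ᵥ fun j => (v j).im) i := by
  simp [mulVec, dotProduct, Complex.im_sum]

section RealMatrix

variable {m : Type*} [Fintype m] {A : Matrix m m ℝ}

theorem isCEigenvalue_of_mulVec_eq_smul {v : m → ℝ} {μ : ℝ} (hv : v ≠ 0) (h : A *ᵥ v = μ • v) :
    IsCEigenvalue A μ := by
  refine ⟨Complex.ofReal ∘ v, fun h0 => hv (funext fun i => by simpa using congrFun h0 i), ?_⟩
  ext i
  exact (RingHom.map_mulVec Complex.ofRealHom A v i).symm.trans (by simp [h])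

attribute [local instance] Matrix.linftyOpNormedAddCommGroup in
theorem IsCEigenvalue.norm_le_norm_map {lam : ℂ} (h : IsCEigenvalue A lam) :
    ‖lam‖ ≤ ‖A.map Complex.ofReal‖ := by
  obtain ⟨v, hv, hAv⟩ := h
  have hle := linfty_opNorm_mulVec (A.map Complex.ofReal) v
  rw [hAv, norm_smul] at hle
  exact le_of_mul_le_mul_right hle (norm_pos_iff.mpr hv)

theorem norm_le_specRad {lam : ℂ} (h : IsCEigenvalue A lam) : ‖lam‖ ≤ specRad A :=
  le_csSup ⟨_, by rintro r ⟨μ, hμ, rfl⟩; exact hμ.norm_le_norm_map⟩ ⟨lam, h, rfl⟩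

theorem specRad_le {c : ℝ} (hc : 0 ≤ c) (h : ∀ lam : ℂ, IsCEigenvalue A lam → ‖lam‖ ≤ c) :
    specRad A ≤ c :=
  Real.sSup_le (by rintro r ⟨lam, hlam, rfl⟩; exact h lam hlam) hc

theorem Matrix.IsSymm.exists_real_eigenvector {lam : ℂ} (hA : A.IsSymm)
    (h : IsCEigenvalue A lam) :
    ∃ μ : ℝ, lam = μ ∧ ∃ w : m → ℝ, w ≠ 0 ∧ A *ᵥ w = μ • w := by
  obtain ⟨v, hv, hAv⟩ := h
  have hherm : (A.map Complex.ofReal).IsHermitian :=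
    IsHermitian.map (by simpa [IsHermitian] using hA.eq) _ (fun _ => by simp)
  obtain ⟨hre, him0⟩ := Complex.pos_iff.mp (dotProduct_star_self_pos_iff.mpr hv)
  have him := hherm.im_star_dotProduct_mulVec_self v
  rw [hAv, dotProduct_smul, smul_eq_mul, RCLike.im_to_complex, Complex.mul_im, ← him0, mul_zero,
    zero_add] at him
  have hreal : lam.im = 0 := (mul_eq_zero.mp him).resolve_right hre.ne'
  have hre_eig : A *ᵥ (fun i => (v i).re) = lam.re • fun i => (v i).re := funext fun i => by
    simpa [hreal] using
      (re_map_ofReal_mulVec A v i).symm.trans (congrArg Complex.re (congrFun hAv i))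
  have him_eig : A *ᵥ (fun i => (v i).im) = lam.re • fun i => (v i).im := funext fun i => by
    simpa [hreal] using
      (im_map_ofReal_mulVec A v i).symm.trans (congrArg Complex.im (congrFun hAv i))
  refine ⟨lam.re, Complex.ext rfl (by simpa using hreal), ?_⟩
  by_cases hre0 : (fun i => (v i).re) = 0
  · refine ⟨_, fun him0 => hv (funext fun i => Complex.ext ?_ ?_), him_eig⟩
    · exact congrFun hre0 i
    · exact congrFun him0 i
  · exact ⟨_, hre0, hre_eig⟩

end RealMatrix

section Companion

variable {n : ℕ} {M : Matrix (Fin n) (Fin n) ℝ} {β : ℝ}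

theorem TAA_map_ofReal (M : Matrix (Fin n) (Fin n) ℝ) (β : ℝ) :
    (TAA M β).map Complex.ofReal =
      fromBlocks ((1 + (β : ℂ)) • M.map Complex.ofReal) ((-(β : ℂ)) • M.map Complex.ofReal)
        1 0 := by
  rw [TAA, fromBlocks_map, Matrix.map_one _ Complex.ofReal_zero Complex.ofReal_one,
    Matrix.map_zero _ Complex.ofReal_zero]
  congr 1 <;> ext <;> simp

theorem isCEigenvalue_TAA_of_quadratic {μ lam : ℂ} (hμ : IsCEigenvalue M μ)
    (hq : lam ^ 2 - (1 + β) * μ * lam + β * μ = 0) : IsCEigenvalue (TAA M β) lam := by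
  obtain ⟨v, hv, hMv⟩ := hμ
  refine ⟨Sum.elim (lam • v) v,
    fun h => hv (funext fun i => by simpa using congrFun h (.inr i)), ?_⟩
  rw [TAA_map_ofReal, fromBlocks_mulVec]
  ext (i | i)
  · simp only [Sum.elim_comp_inl, Sum.elim_comp_inr, Sum.elim_inl, Pi.add_apply, smul_mulVec,
      mulVec_smul, hMv, Pi.smul_apply, smul_eq_mul]
    linear_combination (-v i) * hq
  · simp

theorem IsCEigenvalue.TAA_quadratic {lam : ℂ} (h : IsCEigenvalue (TAA M β) lam) :
    lam = 0 ∨ ∃ μ : ℂ, IsCEigenvalue M μ ∧ lam ^ 2 - (1 + β) * μ * lam + β * μ = 0 := by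
  obtain ⟨u, hu, hTu⟩ := h
  rw [TAA_map_ofReal, fromBlocks_mulVec] at hTu
  obtain ⟨b, rfl⟩ : ∃ b, u = Sum.elim (lam • b) b := by
    refine ⟨u ∘ Sum.inr, funext fun i => ?_⟩
    rcases i with i | i
    · simpa using congrFun hTu (.inr i)
    · rfl
  have hb : b ≠ 0 := by
    rintro rfl
    exact hu (by simp)
  have hrow : ((1 + β) * lam - β) • (M.map Complex.ofReal *ᵥ b) = lam ^ 2 • b := by
    ext i
    have h := congrFun hTu (.inl i)
    simp only [Sum.elim_inl, Sum.elim_comp_inl, Sum.elim_comp_inr, Pi.add_apply, Pi.smul_apply,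
      smul_mulVec, mulVec_smul, smul_eq_mul] at h ⊢
    linear_combination h
  by_cases hc : (1 + β) * lam - β = 0
  · obtain ⟨i, hi⟩ := Function.ne_iff.mp hb
    exact .inl ((by simpa [hc] using congrFun hrow i : lam = 0 ∨ b i = 0).resolve_right hi)
  · refine .inr ⟨lam ^ 2 / ((1 + β) * lam - β), ⟨b, hb, ?_⟩,
      by linear_combination -div_mul_cancel₀ (lam ^ 2) hc⟩
    rw [div_eq_inv_mul, ← smul_smul, ← hrow, smul_smul, inv_mul_cancel₀ hc, one_smul]

end Companion

section Momentum

variable {n : ℕ} {M : Matrix (Fin n) (Fin n) ℝ} {r : ℝ}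

theorem exists_isCEigenvalue_TAA_norm_ge (hr0 : 0 < r) (hr1 : r < 1)
    (hM : IsCEigenvalue M (1 - r ^ 2 : ℝ)) (β : ℝ) :
    ∃ lam, IsCEigenvalue (TAA M β) lam ∧ 1 - r ≤ ‖lam‖ ∧
      (β ≠ optimalMomentum r → 1 - r < ‖lam‖) :=
  let ⟨lam, hq, hle, hlt⟩ := exists_root_norm_ge hr0 hr1 β
  ⟨lam, isCEigenvalue_TAA_of_quadratic hM hq, hle, hlt⟩

theorem specRad_TAA_optimalMomentum_le (hr0 : 0 ≤ r) (hr1 : r < 1)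
    (hM : ∀ μ : ℂ, IsCEigenvalue M μ → ∃ x : ℝ, μ = x ∧ x ∈ Set.Icc 0 (1 - r ^ 2)) :
    specRad (TAA M (optimalMomentum r)) ≤ 1 - r := by
  refine specRad_le (by linarith) fun lam hlam => ?_
  rcases hlam.TAA_quadratic with rfl | ⟨μ, hμ, hq⟩
  · simpa using hr1.le
  · obtain ⟨x, rfl, hx0, hx⟩ := hM μ hμ
    exact norm_le_of_root_optimalMomentum hr0 hr1 hx0 hx hq

end Momentum

section GradientStep

variable {m : Type*} [Fintype m] [DecidableEq m] {H : Matrix m m ℝ} {α : ℝ}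

theorem one_sub_smul_mulVec_eq_smul_iff (hα : α ≠ 0) {w : m → ℝ} {μ : ℝ} :
    (1 - α • H) *ᵥ w = (1 - α * μ) • w ↔ H *ᵥ w = μ • w := by
  rw [sub_mulVec, one_mulVec, smul_mulVec, sub_smul, one_smul, sub_right_inj, mul_smul]
  exact (smul_right_injective _ hα).eq_iff

theorem IsCEigenvalue.exists_real_mem_Icc_of_one_sub_smul (hH : H.IsSymm) {ℓ L : ℝ}
    (hext : ∀ μ : ℝ, (∃ v : m → ℝ, v ≠ 0 ∧ H *ᵥ v = μ • v) → ℓ ≤ μ ∧ μ ≤ L)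
    (hα : 0 < α) (hαL : α * L ≤ 1) {lam : ℂ} (h : IsCEigenvalue (1 - α • H) lam) :
    ∃ x : ℝ, lam = x ∧ x ∈ Set.Icc 0 (1 - α * ℓ) := by
  have hsymm : (1 - α • H).IsSymm := by
    simp [IsSymm, transpose_sub, transpose_smul, hH.eq]
  obtain ⟨x, rfl, w, hw, hMw⟩ := hsymm.exists_real_eigenvector h
  have hx : x = 1 - α * ((1 - x) / α) := by field_simp; ring
  rw [hx, one_sub_smul_mulVec_eq_smul_iff hα.ne'] at hMw
  obtain ⟨hℓ, hL⟩ := hext _ ⟨w, hw, hMw⟩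
  rw [le_div_iff₀ hα] at hℓ
  rw [div_le_iff₀ hα] at hL
  exact ⟨x, rfl, by nlinarith, by linarith⟩

end GradientStep

theorem sqrt_mul_le_sqrt_div {α ℓ L : ℝ} (hα : 0 < α) (hℓ : 0 < ℓ) (hL : 0 < L)
    (hαL : α ≤ 1 / L) : √(α * ℓ) ≤ √(ℓ / L) ∧ (√(α * ℓ) = √(ℓ / L) → α = 1 / L) := by
  have hle : α * ℓ ≤ ℓ / L := by
    rw [div_eq_mul_one_div ℓ, mul_comm ℓ]
    exact mul_le_mul_of_nonneg_right hαL hℓ.le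
  refine ⟨Real.sqrt_le_sqrt hle, fun heq => ?_⟩
  rw [Real.sqrt_inj (by positivity) (by positivity), div_eq_mul_one_div ℓ, mul_comm ℓ] at heq
  exact mul_right_cancel₀ hℓ.ne' heq

theorem stmt9_general (n : ℕ) (H : Matrix (Fin n) (Fin n) ℝ) (hsymm : H.IsSymm)
    (ℓ L : ℝ) (hℓ : 0 < ℓ) (hℓL : ℓ < L)
    (hℓeig : ∃ v : Fin n → ℝ, v ≠ 0 ∧ H.mulVec v = ℓ • v)
    (hext : ∀ μ : ℝ, (∃ v : Fin n → ℝ, v ≠ 0 ∧ H.mulVec v = μ • v) → ℓ ≤ μ ∧ μ ≤ L)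
    (α : ℝ) (hα0 : 0 < α) (hα1 : α ≤ 1 / L)
    (ρq : ℝ) (hρq : ρq = 1 - α * ℓ) :
    (∀ β : ℝ,
      1 - Real.sqrt (1 - ρq) ≤ specRad (TAA ((1 : Matrix (Fin n) (Fin n) ℝ) - α • H) β)) ∧
    specRad (TAA ((1 : Matrix (Fin n) (Fin n) ℝ) - α • H)
        ((1 - Real.sqrt (1 - ρq)) / (1 + Real.sqrt (1 - ρq)))) = 1 - Real.sqrt (1 - ρq) ∧
    (∀ β : ℝ,
      specRad (TAA ((1 : Matrix (Fin n) (Fin n) ℝ) - α • H) β) = 1 - Real.sqrt (1 - ρq) →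
        β = (1 - Real.sqrt (1 - ρq)) / (1 + Real.sqrt (1 - ρq))) ∧
    (∀ α' : ℝ, 0 < α' → α' ≤ 1 / L →
      1 - Real.sqrt (ℓ / L) ≤ 1 - Real.sqrt (1 - (1 - α' * ℓ)) ∧
      (1 - Real.sqrt (1 - (1 - α' * ℓ)) = 1 - Real.sqrt (ℓ / L) → α' = 1 / L)) := by
  have hL : 0 < L := hℓ.trans hℓL
  have hαL : α * L ≤ 1 := by rwa [le_div_iff₀ hL] at hα1
  have hαℓ : α * ℓ < 1 := (mul_lt_mul_of_pos_left hℓL hα0).trans_le hαL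
  set r := √(1 - ρq)
  have hr2 : r ^ 2 = α * ℓ := by rw [Real.sq_sqrt] <;> nlinarith
  have hr0 : 0 < r := Real.sqrt_pos.mpr (by nlinarith)
  have hr1 : r < 1 := by nlinarith
  obtain ⟨v, hv, hHv⟩ := hℓeig
  have hMρ : IsCEigenvalue (1 - α • H) (1 - r ^ 2 : ℝ) :=
    isCEigenvalue_of_mulVec_eq_smul hv (by rwa [hr2, one_sub_smul_mulVec_eq_smul_iff hα0.ne'])
  have hlower := exists_isCEigenvalue_TAA_norm_ge hr0 hr1 hMρ
  have hupper := specRad_TAA_optimalMomentum_le hr0.le hr1 fun μ hμ =>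
    hr2 ▸ hμ.exists_real_mem_Icc_of_one_sub_smul hsymm hext hα0 hαL
  refine ⟨fun β => ?_, ?_, fun β hβ => ?_, fun α' hα'0 hα'1 => ?_⟩
  · obtain ⟨lam, hlam, hle, -⟩ := hlower β
    exact hle.trans (norm_le_specRad hlam)
  · obtain ⟨lam, hlam, hle, -⟩ := hlower (optimalMomentum r)
    exact hupper.antisymm (hle.trans (norm_le_specRad hlam))
  · by_contra hne
    obtain ⟨lam, hlam, -, hlt⟩ := hlower β
    exact (hlt hne).not_ge (hβ ▸ norm_le_specRad hlam)
  · rw [sub_sub_cancel]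
    obtain ⟨hle, heq⟩ := sqrt_mul_le_sqrt_div hα'0 hℓ hL hα'1
    exact ⟨by linarith, fun h => heq (by linarith)⟩

theorem stmt9 (n : ℕ) (H : Matrix (Fin n) (Fin n) ℝ) (hsymm : H.IsSymm) (hpd : H.PosDef)
    (ℓ L : ℝ) (hℓ : 0 < ℓ) (hℓL : ℓ < L)
    (hℓeig : ∃ v : Fin n → ℝ, v ≠ 0 ∧ H.mulVec v = ℓ • v)
    (hLeig : ∃ v : Fin n → ℝ, v ≠ 0 ∧ H.mulVec v = L • v)
    (hext : ∀ μ : ℝ, (∃ v : Fin n → ℝ, v ≠ 0 ∧ H.mulVec v = μ • v) → ℓ ≤ μ ∧ μ ≤ L)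
    (α : ℝ) (hα0 : 0 < α) (hα1 : α ≤ 1 / L)
    (ρq : ℝ) (hρq : ρq = 1 - α * ℓ) :
    (∀ β : ℝ,
      1 - Real.sqrt (1 - ρq) ≤ specRad (TAA ((1 : Matrix (Fin n) (Fin n) ℝ) - α • H) β)) ∧
    specRad (TAA ((1 : Matrix (Fin n) (Fin n) ℝ) - α • H)
        ((1 - Real.sqrt (1 - ρq)) / (1 + Real.sqrt (1 - ρq)))) = 1 - Real.sqrt (1 - ρq) ∧
    (∀ β : ℝ,
      specRad (TAA ((1 : Matrix (Fin n) (Fin n) ℝ) - α • H) β) = 1 - Real.sqrt (1 - ρq) →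
        β = (1 - Real.sqrt (1 - ρq)) / (1 + Real.sqrt (1 - ρq))) ∧
    (∀ α' : ℝ, 0 < α' → α' ≤ 1 / L →
      1 - Real.sqrt (ℓ / L) ≤ 1 - Real.sqrt (1 - (1 - α' * ℓ)) ∧
      (1 - Real.sqrt (1 - (1 - α' * ℓ)) = 1 - Real.sqrt (ℓ / L) → α' = 1 / L)) :=
  stmt9_general n H hsymm ℓ L hℓ hℓL hℓeig hext α hα0 hα1 ρq hρq
end

section
/- Let B be an n×n real matrix whose spectral radius ρ_B satisfies 0 < ρ_B < 1, and assume that ρ_B itself is a (real) eigenvalue of B. Then for every β ∈ ℝ the spectral radius of T(B,β) satisfies ρ(T(B,β)) ≥ 1 − √(1−ρ_B); and if ρ(T(B,β)) = 1 − √(1−ρ_B) for some β ∈ ℝ, then β = (1−√(1−ρ_B))/(1+√(1−ρ_B)). -/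
/-!
If `B v = ρ v`, then `(μ v, v)` is an eigenvector of `T(B,β)` for every root `μ` of
`μ² - (1+β)ρμ + βρ`. Write `ρ = 1 - s²` and `t = 1 - s`. If both roots lie in the closed disc
of radius `t`, their product gives `βρ ≤ t²`, i.e. `β(1+s) ≤ 1-s`, and since no real root
exceeds `t` the quadratic is nonnegative at `t`, i.e. `β(1+s) ≥ 1-s`. If both roots lie in
the open disc, the two inequalities become strict and contradict each other.
-/

open Matrix

namespace IsCEigenvalue

variable {ι : Type*} [Fintype ι] {A : Matrix ι ι ℝ} {lam : ℂ}

lemma mem_spectrum [DecidableEq ι] (h : IsCEigenvalue A lam) :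
    lam ∈ spectrum ℂ (A.map Complex.ofReal) := by
  obtain ⟨v, hv0, hv⟩ := h
  rw [spectrum.mem_iff, isUnit_iff_isUnit_det, isUnit_iff_ne_zero, not_not,
    ← exists_mulVec_eq_zero_iff]
  exact ⟨v, hv0, by simp [sub_mulVec, hv, Algebra.algebraMap_eq_smul_one, smul_mulVec]⟩

lemma norm_le_specRad (h : IsCEigenvalue A lam) : ‖lam‖ ≤ specRad A := by
  classical
  refine le_csSup (((finite_spectrum (A.map Complex.ofReal)).image norm).bddAbove.mono ?_)
    ⟨lam, h, rfl⟩
  rintro _ ⟨μ, hμ, rfl⟩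
  exact ⟨μ, hμ.mem_spectrum, rfl⟩

end IsCEigenvalue

lemma isCEigenvalue_TAA {n : ℕ} {B : Matrix (Fin n) (Fin n) ℝ} {v : Fin n → ℝ} {ρ β : ℝ}
    (hv0 : v ≠ 0) (hv : B *ᵥ v = ρ • v) {μ : ℂ}
    (hμ : μ ^ 2 - ((1 + β) * ρ : ℝ) * μ + (β * ρ : ℝ) = 0) :
    IsCEigenvalue (TAA B β) μ := by
  set w : Fin n → ℂ := fun i => (v i : ℂ)
  have hw : B.map Complex.ofReal *ᵥ w = (ρ : ℂ) • w := by
    ext i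
    have := congrArg Complex.ofReal (congrFun hv i)
    push_cast [mulVec, dotProduct] at this
    simpa [w, mulVec, dotProduct] using this
  refine ⟨Sum.elim (μ • w) w, fun h => hv0 ?_, ?_⟩
  · ext i
    simpa [w] using congrFun h (Sum.inr i)
  · have hsmul (c : ℝ) : (c • B).map Complex.ofReal = (c : ℂ) • B.map Complex.ofReal :=
      Matrix.map_smulₛₗ _ _ c (fun a => Complex.ofReal_mul c a) B
    rw [TAA, neg_smul, fromBlocks_map, Matrix.map_neg _ Complex.ofReal_neg, hsmul, hsmul,
      fromBlocks_mulVec]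
    ext (i | i)
    · simp only [Sum.elim_comp_inl, Sum.elim_comp_inr, Sum.elim_inl, mulVec_smul, smul_mulVec,
        neg_mulVec, hw, Pi.add_apply, Pi.neg_apply, Pi.smul_apply, smul_eq_mul,
        Complex.real_smul, Complex.coe_smul]
      push_cast at hμ ⊢
      linear_combination (-w i) * hμ
    · simp

section Quadratic

variable {p q t : ℝ}

lemma exists_real_root_ge_of_eval_nonpos (h : t ^ 2 - p * t + q ≤ 0) :
    ∃ x : ℝ, x ^ 2 - p * x + q = 0 ∧ t ≤ x := by
  have hD : (t - p / 2) ^ 2 ≤ p ^ 2 / 4 - q := by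
    linarith [show (t - p / 2) ^ 2 = t ^ 2 - p * t + p ^ 2 / 4 by ring]
  refine ⟨p / 2 + √(p ^ 2 / 4 - q), ?_, ?_⟩
  · linear_combination Real.sq_sqrt ((sq_nonneg _).trans hD)
  · linarith [le_abs_self (t - p / 2), Real.abs_le_sqrt hD]

lemma exists_real_root_gt_of_eval_neg (h : t ^ 2 - p * t + q < 0) :
    ∃ x : ℝ, x ^ 2 - p * x + q = 0 ∧ t < x := by
  have hD : (t - p / 2) ^ 2 < p ^ 2 / 4 - q := by
    linarith [show (t - p / 2) ^ 2 = t ^ 2 - p * t + p ^ 2 / 4 by ring]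
  have hlt : |t - p / 2| < √(p ^ 2 / 4 - q) := (Real.lt_sqrt (abs_nonneg _)).2 (by rwa [sq_abs])
  refine ⟨p / 2 + √(p ^ 2 / 4 - q), ?_, ?_⟩
  · linear_combination Real.sq_sqrt ((sq_nonneg _).trans hD.le)
  · linarith [le_abs_self (t - p / 2)]

lemma exists_roots_mul_eq (p q : ℝ) : ∃ μ ν : ℂ,
    μ ^ 2 - p * μ + q = 0 ∧ ν ^ 2 - p * ν + q = 0 ∧ μ * ν = q := by
  obtain ⟨z, hz⟩ := IsAlgClosed.exists_eq_mul_self ((p : ℂ) ^ 2 - 4 * q)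
  refine ⟨(p + z) / 2, (p - z) / 2, ?_, ?_, ?_⟩
  · linear_combination -hz / 4
  · linear_combination -hz / 4
  · linear_combination hz / 4

lemma le_sq_and_eval_nonneg_of_forall_root_norm_le
    (h : ∀ μ : ℂ, μ ^ 2 - p * μ + q = 0 → ‖μ‖ ≤ t) :
    q ≤ t ^ 2 ∧ 0 ≤ t ^ 2 - p * t + q := by
  obtain ⟨μ, ν, hμ, hν, hμν⟩ := exists_roots_mul_eq p q
  refine ⟨?_, ?_⟩
  · calc q ≤ ‖(q : ℂ)‖ := by simpa using le_abs_self q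
      _ = ‖μ‖ * ‖ν‖ := by rw [← hμν, norm_mul]
      _ ≤ t ^ 2 := by nlinarith [h μ hμ, h ν hν, norm_nonneg μ, norm_nonneg ν]
  · by_contra! hneg
    obtain ⟨x, hx, htx⟩ := exists_real_root_gt_of_eval_neg hneg
    have := h x (by exact_mod_cast hx)
    rw [Complex.norm_real, Real.norm_eq_abs] at this
    linarith [le_abs_self x]

lemma lt_sq_and_eval_pos_of_forall_root_norm_lt
    (h : ∀ μ : ℂ, μ ^ 2 - p * μ + q = 0 → ‖μ‖ < t) :
    q < t ^ 2 ∧ 0 < t ^ 2 - p * t + q := by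
  obtain ⟨μ, ν, hμ, hν, hμν⟩ := exists_roots_mul_eq p q
  refine ⟨?_, ?_⟩
  · calc q ≤ ‖(q : ℂ)‖ := by simpa using le_abs_self q
      _ = ‖μ‖ * ‖ν‖ := by rw [← hμν, norm_mul]
      _ < t ^ 2 := by nlinarith [h μ hμ, h ν hν, norm_nonneg μ, norm_nonneg ν]
  · by_contra! hneg
    obtain ⟨x, hx, htx⟩ := exists_real_root_ge_of_eval_nonpos hneg
    have := h x (by exact_mod_cast hx)
    rw [Complex.norm_real, Real.norm_eq_abs] at this
    linarith [le_abs_self x]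

end Quadratic

section SAAQuadratic

variable {ρ s β : ℝ}

lemma sAA_quadratic_identities_at_one_sub (hsρ : s ^ 2 = 1 - ρ) :
    β * ρ - (1 - s) ^ 2 = (1 - s) * (β * (1 + s) - (1 - s)) ∧
    (1 - s) ^ 2 - (1 + β) * ρ * (1 - s) + β * ρ = s * (1 - s) * (β * (1 + s) - (1 - s)) := by
  obtain rfl : ρ = 1 - s ^ 2 := by linarith
  constructor <;> ring

lemma sAA_eq_of_forall_root_norm_le (hρ : 0 < ρ) (hs : 0 < s) (hsρ : s ^ 2 = 1 - ρ)
    (h : ∀ μ : ℂ, μ ^ 2 - ((1 + β) * ρ : ℝ) * μ + (β * ρ : ℝ) = 0 → ‖μ‖ ≤ 1 - s) :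
    β = (1 - s) / (1 + s) := by
  have hs1 : 0 < 1 - s := by nlinarith
  obtain ⟨hq, heval⟩ := le_sq_and_eval_nonneg_of_forall_root_norm_le h
  obtain ⟨hq', heval'⟩ := sAA_quadratic_identities_at_one_sub (β := β) hsρ
  have hle : β * (1 + s) - (1 - s) ≤ 0 :=
    nonpos_of_mul_nonpos_right (hq' ▸ sub_nonpos.2 hq) hs1
  have hge : 0 ≤ β * (1 + s) - (1 - s) :=
    nonneg_of_mul_nonneg_right (heval' ▸ heval) (by positivity)
  rw [eq_div_iff (by positivity)]
  linarith

lemma sAA_exists_root_one_sub_le_norm (hρ : 0 < ρ) (hs : 0 < s) (hsρ : s ^ 2 = 1 - ρ) (β : ℝ) :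
    ∃ μ : ℂ, μ ^ 2 - ((1 + β) * ρ : ℝ) * μ + (β * ρ : ℝ) = 0 ∧ 1 - s ≤ ‖μ‖ := by
  have hs1 : 0 < 1 - s := by nlinarith
  by_contra! h
  obtain ⟨hq, heval⟩ := lt_sq_and_eval_pos_of_forall_root_norm_lt h
  obtain ⟨hq', heval'⟩ := sAA_quadratic_identities_at_one_sub (β := β) hsρ
  have hlt : β * (1 + s) - (1 - s) < 0 :=
    neg_of_mul_neg_right (hq' ▸ sub_neg.2 hq) hs1.le
  have hgt : 0 < β * (1 + s) - (1 - s) :=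
    pos_of_mul_pos_right (heval' ▸ heval) (by positivity)
  linarith

end SAAQuadratic

theorem stmt11_general (n : ℕ) (B : Matrix (Fin n) (Fin n) ℝ) (ρB : ℝ)
    (h0 : 0 < ρB) (h1 : ρB < 1)
    (heig : ∃ v : Fin n → ℝ, v ≠ 0 ∧ B.mulVec v = ρB • v) :
    (∀ β : ℝ, 1 - Real.sqrt (1 - ρB) ≤ specRad (TAA B β)) ∧
    (∀ β : ℝ, specRad (TAA B β) = 1 - Real.sqrt (1 - ρB) →
      β = (1 - Real.sqrt (1 - ρB)) / (1 + Real.sqrt (1 - ρB))) := by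
  obtain ⟨v, hv0, hv⟩ := heig
  have hs : 0 < √(1 - ρB) := Real.sqrt_pos.2 (by linarith)
  have hsρ : √(1 - ρB) ^ 2 = 1 - ρB := Real.sq_sqrt (by linarith)
  refine ⟨fun β => ?_, fun β hβ => ?_⟩
  · obtain ⟨μ, hμ, hle⟩ := sAA_exists_root_one_sub_le_norm h0 hs hsρ β
    exact hle.trans (isCEigenvalue_TAA hv0 hv hμ).norm_le_specRad
  · exact sAA_eq_of_forall_root_norm_le h0 hs hsρ fun μ hμ =>
      hβ ▸ (isCEigenvalue_TAA hv0 hv hμ).norm_le_specRad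

theorem stmt11 (n : ℕ) (B : Matrix (Fin n) (Fin n) ℝ) (ρB : ℝ)
    (h0 : 0 < ρB) (h1 : ρB < 1)
    (hρ : specRad B = ρB)
    (heig : ∃ v : Fin n → ℝ, v ≠ 0 ∧ B.mulVec v = ρB • v) :
    (∀ β : ℝ, 1 - Real.sqrt (1 - ρB) ≤ specRad (TAA B β)) ∧
    (∀ β : ℝ, specRad (TAA B β) = 1 - Real.sqrt (1 - ρB) →
      β = (1 - Real.sqrt (1 - ρB)) / (1 + Real.sqrt (1 - ρB))) :=
  stmt11_general n B ρB h0 h1 heig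
end

section
/- Let H be an n×n real symmetric positive definite matrix with smallest eigenvalue ℓ and largest eigenvalue L, 0 < ℓ < L, and write κ = L/ℓ. Then the infimum over α > 0 and β ∈ ℝ of the spectral radius ρ(T_N(I−αH, β)) equals (√κ − 1)/(√κ + 1), it is attained at α* = 2/(L+ℓ) and β* = ((√κ − 1)/(√κ + 1))², and these are the unique optimal parameters: if ρ(T_N(I−αH, β)) = (√κ−1)/(√κ+1) with α > 0, then α = α* and β = β*. Moreover (√κ−1)/(√κ+1) < 1 − √(4ℓ/(3L+ℓ)). -/
/-- The block matrix `T_N(M,β) = [[(1+β)M, −βI],[I, 0]]` (Jacobian of sNGMRES-R(1)). -/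
noncomputable def TN {n : ℕ} (M : Matrix (Fin n) (Fin n) ℝ) (β : ℝ) :
    Matrix (Fin n ⊕ Fin n) (Fin n ⊕ Fin n) ℝ :=
  Matrix.fromBlocks ((1 + β) • M) ((-β) • (1 : Matrix (Fin n) (Fin n) ℝ))
    (1 : Matrix (Fin n) (Fin n) ℝ) 0

/-!
An eigenvector of `T_N(I - αH, β)` has the form `(z y, y)` with `y` an eigenvector of `H`, so the
eigenvalues of `T_N(I - αH, β)` are the roots of `z² - (1 + β)(1 - αμ) z + β` for the eigenvalues
`μ` of `H`. If all of them lie in the closed disc of radius `r = (√κ - 1)/(√κ + 1)`, the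
quadratics for `μ = ℓ` and `μ = L` give `β ≤ r²` and `r |(1 + β)(1 - αμ)| ≤ r² + β`. Eliminating
`α` from the two bounds yields `(1 - r²)(β - r²) ≥ 0`, so `β = r²`, and then `α = 2/(L + ℓ)`.
For these parameters every quadratic has non-positive discriminant, so every eigenvalue has
modulus exactly `√β = r`.
-/

open Complex Matrix

lemma norm_sq_eq_of_sq_le_four_mul {c b : ℝ} (hD : c ^ 2 ≤ 4 * b) {z : ℂ}
    (hz : z ^ 2 - c * z + b = 0) : ‖z‖ ^ 2 = b := by
  have hre := congrArg Complex.re hz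
  have him := congrArg Complex.im hz
  simp only [sq, Complex.sub_re, Complex.add_re, Complex.mul_re, Complex.ofReal_re,
    Complex.ofReal_im, Complex.sub_im, Complex.add_im, Complex.mul_im, Complex.zero_re,
    Complex.zero_im, zero_mul, sub_zero, add_zero] at hre him
  rw [Complex.sq_norm, Complex.normSq_apply]
  -- a real root is the double root `c / 2`; a non-real one has real part `c / 2` by `him`
  have hx : 2 * z.re = c := by
    rcases eq_or_ne z.im 0 with hy | hy
    · rw [hy] at hre
      have : (2 * z.re - c) ^ 2 = 0 := by nlinarith [sq_nonneg (2 * z.re - c)]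
      linarith [pow_eq_zero_iff (n := 2) two_ne_zero |>.1 this]
    · exact mul_right_cancel₀ hy (by linarith)
  linear_combination -hre + z.re * hx

lemma le_sq_and_mul_abs_le_of_forall_root_norm_le {c b r : ℝ} (hr : 0 ≤ r)
    (h : ∀ z : ℂ, z ^ 2 - c * z + b = 0 → ‖z‖ ≤ r) : b ≤ r ^ 2 ∧ r * |c| ≤ r ^ 2 + b := by
  rcases le_or_gt 0 (c ^ 2 - 4 * b) with hD | hD
  · set s := Real.sqrt (c ^ 2 - 4 * b)
    have hs : s ^ 2 = c ^ 2 - 4 * b := Real.sq_sqrt hD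
    have root : ∀ x : ℝ, x ^ 2 - c * x + b = 0 → |x| ≤ r := fun x hx => by
      simpa using h x (by exact_mod_cast hx)
    have h₁ := abs_le.1 (root ((c + s) / 2) (by linear_combination hs / 4))
    have h₂ := abs_le.1 (root ((c - s) / 2) (by linear_combination hs / 4))
    constructor
    · nlinarith
    · rcases abs_cases c with ⟨hc, _⟩ | ⟨hc, _⟩ <;> rw [hc] <;> nlinarith
  · set s := Real.sqrt (4 * b - c ^ 2)
    have hs : (s : ℂ) ^ 2 = 4 * b - c ^ 2 := by exact_mod_cast Real.sq_sqrt (by linarith)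
    have hroot : ((c + s * I) / 2) ^ 2 - c * ((c + s * I) / 2) + b = 0 := by
      linear_combination (I ^ 2 / 4) * hs + ((4 * b - c ^ 2) / 4) * I_sq
    have hnorm := norm_sq_eq_of_sq_le_four_mul (by linarith) hroot
    have hle := h _ hroot
    constructor
    · nlinarith [norm_nonneg ((c + s * I) / 2)]
    · nlinarith [sq_nonneg (r - |c| / 2), sq_abs c]

lemma Matrix.IsSymm.im_eq_zero_of_map_ofReal_mulVec_eq {n : Type*} [Fintype n] [DecidableEq n]
    {M : Matrix n n ℝ} (hM : M.IsSymm) {v : n → ℂ} {z : ℂ} (hv : v ≠ 0)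
    (h : M.map ofReal *ᵥ v = z • v) : z.im = 0 := by
  have hH : (M.map ofReal).IsHermitian :=
    (isHermitian_iff_isSymm.2 hM).map _ fun x => (Complex.conj_ofReal x).symm
  have hz : z ∈ spectrum ℂ (M.map ofReal) := by
    rw [← spectrum_toLin', ← Module.End.hasEigenvalue_iff_mem_spectrum]
    exact Module.End.hasEigenvalue_of_hasEigenvector
      ⟨Module.End.mem_eigenspace_iff.2 (by simpa using h), hv⟩
  obtain ⟨_, ⟨i, rfl⟩, rfl⟩ := hH.spectrum_eq_image_range ▸ hz
  simp

lemma Matrix.exists_mulVec_eq_of_map_ofReal_mulVec_eq {n : Type*} [Fintype n]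
    {M : Matrix n n ℝ} {v : n → ℂ} {μ : ℝ} (hv : v ≠ 0)
    (h : M.map ofReal *ᵥ v = (μ : ℂ) • v) : ∃ w : n → ℝ, w ≠ 0 ∧ M *ᵥ w = μ • w := by
  have key : ∀ f : ℂ →ₗ[ℝ] ℝ, M *ᵥ (f ∘ v) = μ • (f ∘ v) := fun f => funext fun i => by
    have := congrArg f (congrFun h i)
    simp only [mulVec, dotProduct, map_apply, Pi.smul_apply, smul_eq_mul, map_sum] at this
    simpa only [mulVec, dotProduct, Function.comp_apply, Pi.smul_apply, smul_eq_mul,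
      ← Complex.real_smul, map_smul] using this
  obtain ⟨i, hi⟩ := Function.ne_iff.1 hv
  by_cases hre : (v i).re = 0
  · exact ⟨Complex.imLm ∘ v, fun h0 => hi (Complex.ext hre (congrFun h0 i)), key _⟩
  · exact ⟨Complex.reLm ∘ v, fun h0 => hre (congrFun h0 i), key _⟩

lemma bddAbove_norm_isCEigenvalue {n : Type*} [Fintype n] [DecidableEq n] (A : Matrix n n ℝ) :
    BddAbove {r : ℝ | ∃ z : ℂ, IsCEigenvalue A z ∧ r = ‖z‖} := by
  refine (((Module.End.finite_hasEigenvalue (toLin' (A.map ofReal))).image (‖·‖)).bddAbove).mono ?_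
  rintro _ ⟨z, ⟨v, hv, h⟩, rfl⟩
  exact ⟨z, Module.End.hasEigenvalue_of_hasEigenvector
    ⟨Module.End.mem_eigenspace_iff.2 (by simpa using h), hv⟩, rfl⟩

lemma norm_le_specRad_s16 {n : Type*} [Fintype n] [DecidableEq n] {A : Matrix n n ℝ} {z : ℂ}
    (hz : IsCEigenvalue A z) : ‖z‖ ≤ specRad A :=
  le_csSup (bddAbove_norm_isCEigenvalue A) ⟨z, hz, rfl⟩

lemma specRad_eq_of_forall_norm_eq {n : Type*} [Fintype n] {A : Matrix n n ℝ} {z : ℂ} {r : ℝ}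
    (hz : IsCEigenvalue A z) (h : ∀ z, IsCEigenvalue A z → ‖z‖ = r) : specRad A = r := by
  have : {r : ℝ | ∃ z : ℂ, IsCEigenvalue A z ∧ r = ‖z‖} = {r} := by
    ext s
    exact ⟨fun ⟨z, hz, hs⟩ => hs.trans (h z hz), fun hs => ⟨z, hz, hs.trans (h z hz).symm⟩⟩
  rw [specRad, this, csSup_singleton]

section HeavyBall

variable {ℓ L r : ℝ}

lemma heavyBall_rate_identity {κ : ℝ} (hκ : 0 ≤ κ) :
    (1 + ((√κ - 1) / (√κ + 1)) ^ 2) * (κ - 1) = 2 * ((√κ - 1) / (√κ + 1)) * (κ + 1) := by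
  have ht : √κ ^ 2 = κ := Real.sq_sqrt hκ
  have ht' : √κ + 1 ≠ 0 := by positivity
  field_simp
  linear_combination -4 * ht

lemma heavyBall_rate_mem_Ioo {κ : ℝ} (hκ : 1 < κ) : (√κ - 1) / (√κ + 1) ∈ Set.Ioo 0 1 := by
  have ht : 1 < √κ := Real.lt_sqrt_of_sq_lt (by linarith)
  exact ⟨div_pos (by linarith) (by positivity), (div_lt_one (by positivity)).2 (by linarith)⟩

lemma heavyBall_rate_lt_one_sub_sqrt {κ : ℝ} (hκ : 1 < κ) :
    (√κ - 1) / (√κ + 1) < 1 - √(4 / (3 * κ + 1)) := by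
  have ht : 1 < √κ := Real.lt_sqrt_of_sq_lt (by linarith)
  have hκt : κ = √κ ^ 2 := (Real.sq_sqrt (by linarith)).symm
  have h1r : 1 - (√κ - 1) / (√κ + 1) = 2 / (√κ + 1) := by field_simp; ring
  suffices √(4 / (3 * κ + 1)) < 2 / (√κ + 1) by linarith
  rw [Real.sqrt_lt' (by positivity), div_pow, div_lt_div_iff₀ (by positivity) (by positivity)]
  nlinarith

lemma heavyBall_params_unique {α β : ℝ} (hℓ : 0 < ℓ) (hℓL : ℓ < L) (hr : r < 1)
    (hkey : (1 + r ^ 2) * (L - ℓ) = 2 * r * (L + ℓ)) (hβ : β ≤ r ^ 2)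
    (hrℓ : r * |(1 + β) * (1 - α * ℓ)| ≤ r ^ 2 + β)
    (hrL : r * |(1 + β) * (1 - α * L)| ≤ r ^ 2 + β) :
    α = 2 / (L + ℓ) ∧ β = r ^ 2 := by
  have hr₀ : 0 < r := by nlinarith
  have h1β : 0 < 1 + β := by nlinarith [abs_nonneg ((1 + β) * (1 - α * ℓ))]
  have hA : r * ((1 + β) * (1 - α * ℓ)) ≤ r ^ 2 + β := by
    nlinarith [le_abs_self ((1 + β) * (1 - α * ℓ))]
  have hB : r * ((1 + β) * (α * L - 1)) ≤ r ^ 2 + β := by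
    nlinarith [neg_abs_le ((1 + β) * (1 - α * L))]
  -- `L * hA + ℓ * hB` eliminates `α`
  have hsum : r * (1 + β) * (L - ℓ) ≤ (r ^ 2 + β) * (L + ℓ) := by
    nlinarith [mul_le_mul_of_nonneg_left hA (by linarith : (0 : ℝ) ≤ L),
      mul_le_mul_of_nonneg_left hB hℓ.le]
  have hβeq : β = r ^ 2 := by
    have h₂ : 2 * r ^ 2 * (1 + β) * (L + ℓ) ≤ (r ^ 2 + β) * (1 + r ^ 2) * (L + ℓ) := by
      have e : (1 + r ^ 2) * (r * (1 + β) * (L - ℓ)) = 2 * r ^ 2 * (1 + β) * (L + ℓ) := by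
        linear_combination r * (1 + β) * hkey
      nlinarith [mul_le_mul_of_nonneg_left hsum (by positivity : (0 : ℝ) ≤ 1 + r ^ 2)]
    have h₃ : 0 ≤ (β - r ^ 2) * (1 - r ^ 2) := by
      nlinarith [le_of_mul_le_mul_right h₂ (by linarith)]
    linarith [nonneg_of_mul_nonneg_left h₃ (by nlinarith)]
  subst hβeq
  have hL : 0 < L := hℓ.trans hℓL
  have hℓα : 2 - α * (L + ℓ) ≤ 0 := nonpos_of_mul_nonpos_right
    (by nlinarith [mul_le_mul_of_nonneg_right hA (by linarith : (0 : ℝ) ≤ L + ℓ)] :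
      r * (1 + r ^ 2) * ℓ * (2 - α * (L + ℓ)) ≤ 0) (by positivity)
  have hLα : α * (L + ℓ) - 2 ≤ 0 := nonpos_of_mul_nonpos_right
    (by nlinarith [mul_le_mul_of_nonneg_right hB (by linarith : (0 : ℝ) ≤ L + ℓ)] :
      r * (1 + r ^ 2) * L * (α * (L + ℓ) - 2) ≤ 0) (by positivity)
  exact ⟨by rw [eq_div_iff (by linarith)]; linarith, rfl⟩

lemma heavyBall_discrim_nonpos {μ : ℝ} (hℓ : 0 < ℓ)
    (hkey : (1 + r ^ 2) * (L - ℓ) = 2 * r * (L + ℓ)) (hμ : ℓ ≤ μ ∧ μ ≤ L) :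
    ((1 + r ^ 2) * (1 - 2 / (L + ℓ) * μ)) ^ 2 ≤ 4 * r ^ 2 := by
  have hLℓ : 0 < L + ℓ := by linarith
  have hx : (1 + r ^ 2) * (1 - 2 / (L + ℓ) * μ) * (L + ℓ) = (1 + r ^ 2) * (L + ℓ - 2 * μ) := by
    field_simp
  have hup : (1 + r ^ 2) * (1 - 2 / (L + ℓ) * μ) ≤ 2 * r := by
    refine le_of_mul_le_mul_right ?_ hLℓ
    nlinarith
  have hlo : -(2 * r) ≤ (1 + r ^ 2) * (1 - 2 / (L + ℓ) * μ) := by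
    refine le_of_mul_le_mul_right ?_ hLℓ
    nlinarith
  nlinarith [sq_le_sq' hlo hup]

end HeavyBall

section SpectrumTN

variable {n : ℕ} {ℓ L r : ℝ}

lemma TN_map_ofReal (M : Matrix (Fin n) (Fin n) ℝ) (β : ℝ) :
    (TN M β).map ofReal = fromBlocks ((1 + β : ℂ) • M.map ofReal) (-(β : ℂ) • 1) 1 0 := by
  rw [TN, fromBlocks_map]
  congr 1
  · ext i j; simp
  · ext i j; by_cases hij : i = j <;> simp [one_apply, hij]
  · simp

lemma isCEigenvalue_TN_iff (M : Matrix (Fin n) (Fin n) ℝ) (β : ℝ) (z : ℂ) :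
    IsCEigenvalue (TN M β) z ↔
      ∃ y : Fin n → ℂ, y ≠ 0 ∧ ((1 + β) * z) • (M.map ofReal *ᵥ y) = (z ^ 2 + β) • y := by
  simp only [IsCEigenvalue, TN_map_ofReal, fromBlocks_mulVec, smul_mulVec, one_mulVec,
    zero_mulVec, add_zero]
  constructor
  · rintro ⟨v, hv, h⟩
    have htop (i) := congrFun h (Sum.inl i)
    have hbot (i) : v (Sum.inl i) = z * v (Sum.inr i) := congrFun h (Sum.inr i)
    have hbot' : v ∘ Sum.inl = z • (v ∘ Sum.inr) := funext hbot
    simp only [Sum.elim_inl, Pi.add_apply, Pi.smul_apply, smul_eq_mul, hbot', mulVec_smul,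
      Function.comp_apply] at htop
    refine ⟨v ∘ Sum.inr, fun hy => hv ?_, funext fun i => ?_⟩
    · rw [← Sum.elim_comp_inl_inr v, hbot', hy, smul_zero, Sum.elim_zero_zero]
    · simp only [Pi.smul_apply, smul_eq_mul, Function.comp_apply]
      linear_combination htop i + z * hbot i
  · rintro ⟨y, hy, h⟩
    refine ⟨Sum.elim (z • y) y, fun h0 => hy (funext fun i => congrFun h0 (Sum.inr i)), ?_⟩
    ext (i | i)
    · have := congrFun h i
      simp only [Sum.elim_comp_inl, Sum.elim_comp_inr, Sum.elim_inl, Pi.add_apply, Pi.smul_apply,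
        smul_eq_mul, mulVec_smul] at this ⊢
      linear_combination this
    · rfl

lemma isCEigenvalue_TN_one_sub_smul_of_mulVec_eq {H : Matrix (Fin n) (Fin n) ℝ}
    {w : Fin n → ℝ} {μ α β : ℝ} {z : ℂ} (hw : w ≠ 0) (hHw : H *ᵥ w = μ • w)
    (hz : z ^ 2 - ((1 + β) * (1 - α * μ) : ℝ) * z + β = 0) :
    IsCEigenvalue (TN (1 - α • H) β) z := by
  have hMw : (1 - α • H) *ᵥ w = (1 - α * μ) • w := by
    rw [sub_mulVec, one_mulVec, smul_mulVec, hHw, smul_smul, sub_smul, one_smul]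
  refine (isCEigenvalue_TN_iff _ _ _).2 ⟨ofReal ∘ w, fun h0 => hw ?_, funext fun i => ?_⟩
  · exact funext fun i => by simpa using congrFun h0 i
  · have := RingHom.map_mulVec ofRealHom (1 - α • H) w i
    change (((1 - α • H) *ᵥ w) i : ℂ) = ((1 - α • H).map ofReal *ᵥ ofReal ∘ w) i at this
    simp only [hMw, Pi.smul_apply, smul_eq_mul, Function.comp_apply] at this ⊢
    rw [← this]
    push_cast at hz ⊢
    linear_combination -(w i : ℂ) * hz

lemma exists_eigenvalue_of_isCEigenvalue_TN_one_sub_smul {H : Matrix (Fin n) (Fin n) ℝ}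
    (hH : H.IsSymm) {α β : ℝ} {z : ℂ} (hα : α ≠ 0) (hβ₀ : β ≠ 0) (hβ₁ : 1 + β ≠ 0)
    (hz : IsCEigenvalue (TN (1 - α • H) β) z) :
    ∃ μ : ℝ, (∃ w : Fin n → ℝ, w ≠ 0 ∧ H *ᵥ w = μ • w) ∧
      z ^ 2 - ((1 + β) * (1 - α * μ) : ℝ) * z + β = 0 := by
  obtain ⟨y, hy, h⟩ := (isCEigenvalue_TN_iff _ _ _).1 hz
  have hβ₁' : (1 + β : ℂ) ≠ 0 := by exact_mod_cast hβ₁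
  have hz₀ : z ≠ 0 := by
    rintro rfl
    rw [mul_zero, zero_smul, eq_comm, smul_eq_zero] at h
    have : (β : ℂ) = 0 := by simpa using h.resolve_right hy
    exact hβ₀ (by exact_mod_cast this)
  have hα' : (α : ℂ) ≠ 0 := by exact_mod_cast hα
  have hM : (1 - α • H).map ofReal = 1 - (α : ℂ) • H.map ofReal := by
    ext i j; by_cases hij : i = j <;> simp [one_apply, hij]
  set ζ : ℂ := ((1 + β) * z - (z ^ 2 + β)) / ((1 + β) * z * α) with hζ
  have hHy : H.map ofReal *ᵥ y = ζ • y := funext fun i => by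
    have := congrFun h i
    simp only [hM, sub_mulVec, one_mulVec, smul_mulVec, Pi.smul_apply, Pi.sub_apply,
      smul_eq_mul] at this ⊢
    rw [hζ]
    field_simp
    linear_combination -this
  have hζ_re : (ζ.re : ℂ) = ζ :=
    Complex.ext rfl (by simpa using (hH.im_eq_zero_of_map_ofReal_mulVec_eq hy hHy).symm)
  obtain ⟨w, hw, hHw⟩ := exists_mulVec_eq_of_map_ofReal_mulVec_eq hy (hζ_re ▸ hHy)
  refine ⟨ζ.re, ⟨w, hw, hHw⟩, ?_⟩
  push_cast
  rw [hζ_re, hζ]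
  field_simp
  ring

lemma eq_of_specRad_TN_one_sub_smul_le {H : Matrix (Fin n) (Fin n) ℝ} {α β : ℝ} (hℓ : 0 < ℓ)
    (hℓL : ℓ < L) (hℓeig : ∃ w : Fin n → ℝ, w ≠ 0 ∧ H *ᵥ w = ℓ • w)
    (hLeig : ∃ w : Fin n → ℝ, w ≠ 0 ∧ H *ᵥ w = L • w) (hr₀ : 0 ≤ r) (hr₁ : r < 1)
    (hkey : (1 + r ^ 2) * (L - ℓ) = 2 * r * (L + ℓ)) (h : specRad (TN (1 - α • H) β) ≤ r) :
    α = 2 / (L + ℓ) ∧ β = r ^ 2 := by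
  have hroots {μ : ℝ} (hμ : ∃ w : Fin n → ℝ, w ≠ 0 ∧ H *ᵥ w = μ • w) (z : ℂ)
      (hz : z ^ 2 - ((1 + β) * (1 - α * μ) : ℝ) * z + β = 0) : ‖z‖ ≤ r :=
    let ⟨_, hw, hHw⟩ := hμ
    (norm_le_specRad_s16 (isCEigenvalue_TN_one_sub_smul_of_mulVec_eq hw hHw hz)).trans h
  obtain ⟨hβ, hrℓ⟩ := le_sq_and_mul_abs_le_of_forall_root_norm_le hr₀ (hroots hℓeig)
  obtain ⟨-, hrL⟩ := le_sq_and_mul_abs_le_of_forall_root_norm_le hr₀ (hroots hLeig)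
  exact heavyBall_params_unique hℓ hℓL hr₁ hkey hβ hrℓ hrL

lemma specRad_TN_one_sub_smul_eq {H : Matrix (Fin n) (Fin n) ℝ} (hH : H.IsSymm) (hℓ : 0 < ℓ)
    (hℓeig : ∃ w : Fin n → ℝ, w ≠ 0 ∧ H *ᵥ w = ℓ • w)
    (hext : ∀ μ : ℝ, (∃ w : Fin n → ℝ, w ≠ 0 ∧ H *ᵥ w = μ • w) → ℓ ≤ μ ∧ μ ≤ L)
    (hr₀ : 0 < r) (hkey : (1 + r ^ 2) * (L - ℓ) = 2 * r * (L + ℓ)) :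
    specRad (TN (1 - (2 / (L + ℓ)) • H) (r ^ 2)) = r := by
  have hLℓ : 0 < L + ℓ := by linarith [(hext ℓ hℓeig).2]
  obtain ⟨w, hw, hHw⟩ := hℓeig
  refine specRad_eq_of_forall_norm_eq (z := r)
    (isCEigenvalue_TN_one_sub_smul_of_mulVec_eq hw hHw ?_) fun z hz => ?_
  · have hc : (1 + r ^ 2) * (1 - 2 / (L + ℓ) * ℓ) = 2 * r := by
      field_simp
      linear_combination hkey
    rw [hc]
    push_cast
    ring
  · obtain ⟨μ, hμ, hz⟩ := exists_eigenvalue_of_isCEigenvalue_TN_one_sub_smul hH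
      (div_pos two_pos hLℓ).ne' (by positivity) (by positivity) hz
    have := norm_sq_eq_of_sq_le_four_mul (heavyBall_discrim_nonpos hℓ hkey (hext μ hμ)) hz
    exact (pow_left_inj₀ (norm_nonneg z) hr₀.le two_ne_zero).1 this

end SpectrumTN

theorem stmt16_general (n : ℕ) (H : Matrix (Fin n) (Fin n) ℝ) (hsymm : H.IsSymm)
    (ℓ L : ℝ) (hℓ : 0 < ℓ) (hℓL : ℓ < L)
    (hℓeig : ∃ v : Fin n → ℝ, v ≠ 0 ∧ H.mulVec v = ℓ • v)
    (hLeig : ∃ v : Fin n → ℝ, v ≠ 0 ∧ H.mulVec v = L • v)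
    (hext : ∀ μ : ℝ, (∃ v : Fin n → ℝ, v ≠ 0 ∧ H.mulVec v = μ • v) → ℓ ≤ μ ∧ μ ≤ L)
    (κ : ℝ) (hκ : κ = L / ℓ) :
    (∀ α β : ℝ, 0 < α →
      (Real.sqrt κ - 1) / (Real.sqrt κ + 1)
        ≤ specRad (TN ((1 : Matrix (Fin n) (Fin n) ℝ) - α • H) β)) ∧
    specRad (TN ((1 : Matrix (Fin n) (Fin n) ℝ) - (2 / (L + ℓ)) • H)
        (((Real.sqrt κ - 1) / (Real.sqrt κ + 1)) ^ 2))
      = (Real.sqrt κ - 1) / (Real.sqrt κ + 1) ∧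
    (∀ α β : ℝ, 0 < α →
      specRad (TN ((1 : Matrix (Fin n) (Fin n) ℝ) - α • H) β)
          = (Real.sqrt κ - 1) / (Real.sqrt κ + 1) →
        α = 2 / (L + ℓ) ∧ β = ((Real.sqrt κ - 1) / (Real.sqrt κ + 1)) ^ 2) ∧
    (Real.sqrt κ - 1) / (Real.sqrt κ + 1) < 1 - Real.sqrt (4 * ℓ / (3 * L + ℓ)) := by
  have hκ₁ : 1 < κ := hκ ▸ (one_lt_div hℓ).2 hℓL
  set r := (√κ - 1) / (√κ + 1)
  obtain ⟨hr₀, hr₁⟩ := heavyBall_rate_mem_Ioo hκ₁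
  have hkey : (1 + r ^ 2) * (L - ℓ) = 2 * r * (L + ℓ) := by
    rw [show L = κ * ℓ by rw [hκ]; field_simp]
    linear_combination ℓ * heavyBall_rate_identity (by linarith : 0 ≤ κ)
  have hparams (α β : ℝ) (h : specRad (TN (1 - α • H) β) ≤ r) :=
    eq_of_specRad_TN_one_sub_smul_le hℓ hℓL hℓeig hLeig hr₀.le hr₁ hkey h
  have hopt := specRad_TN_one_sub_smul_eq hsymm hℓ hℓeig hext hr₀ hkey
  refine ⟨fun α β _ => not_lt.1 fun hlt => ?_, hopt, fun α β _ h => hparams α β h.le, ?_⟩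
  · obtain ⟨rfl, rfl⟩ := hparams α β hlt.le
    exact hlt.ne hopt
  · rw [show 4 * ℓ / (3 * L + ℓ) = 4 / (3 * κ + 1) by rw [hκ]; field_simp]
    exact heavyBall_rate_lt_one_sub_sqrt hκ₁

theorem stmt16 (n : ℕ) (H : Matrix (Fin n) (Fin n) ℝ) (hsymm : H.IsSymm) (hpd : H.PosDef)
    (ℓ L : ℝ) (hℓ : 0 < ℓ) (hℓL : ℓ < L)
    (hℓeig : ∃ v : Fin n → ℝ, v ≠ 0 ∧ H.mulVec v = ℓ • v)
    (hLeig : ∃ v : Fin n → ℝ, v ≠ 0 ∧ H.mulVec v = L • v)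
    (hext : ∀ μ : ℝ, (∃ v : Fin n → ℝ, v ≠ 0 ∧ H.mulVec v = μ • v) → ℓ ≤ μ ∧ μ ≤ L)
    (κ : ℝ) (hκ : κ = L / ℓ) :
    (∀ α β : ℝ, 0 < α →
      (Real.sqrt κ - 1) / (Real.sqrt κ + 1)
        ≤ specRad (TN ((1 : Matrix (Fin n) (Fin n) ℝ) - α • H) β)) ∧
    specRad (TN ((1 : Matrix (Fin n) (Fin n) ℝ) - (2 / (L + ℓ)) • H)
        (((Real.sqrt κ - 1) / (Real.sqrt κ + 1)) ^ 2))
      = (Real.sqrt κ - 1) / (Real.sqrt κ + 1) ∧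
    (∀ α β : ℝ, 0 < α →
      specRad (TN ((1 : Matrix (Fin n) (Fin n) ℝ) - α • H) β)
          = (Real.sqrt κ - 1) / (Real.sqrt κ + 1) →
        α = 2 / (L + ℓ) ∧ β = ((Real.sqrt κ - 1) / (Real.sqrt κ + 1)) ^ 2) ∧
    (Real.sqrt κ - 1) / (Real.sqrt κ + 1) < 1 - Real.sqrt (4 * ℓ / (3 * L + ℓ)) :=
  stmt16_general n H hsymm ℓ L hℓ hℓL hℓeig hLeig hext κ hκ
end
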